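/- Let G be a finite digraph and a, b vertices of G. Set A := N⁺(a) \ {b}, B := N⁻(b) \ {a}, let H := Ind(A \ B, B \ A), and let t be the number of connected components of H regarded as an undirected graph. Let Ω₃⁰ be the set of all ω ∈ Ω₃^{(a,b)}(G) such that no elementary 3-path occurring in ω with nonzero coefficient is a terminal element. Then Ω₃⁰ is a K-subspace of Ω₃^{(a,b)}(G) of dimension |E(H)| − |V(H)| + t. -/

import Mathlib

/-!
A terminal-free ∂-invariant `(a,b)`-cluster can only contain paths `e_{aijb}` with
`i ∈ A \ B`, `j ∈ B \ A` and `i → j`, so it is a weight function `g` on the edges of `H`.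
Among the faces of `e_{aijb}` exactly `e_{aib}` and `e_{ajb}` are not allowed, and the coefficient
of `e_{acb}` in `∂ω` is the value at `c` of the signed incidence matrix of `H` applied to `g`.
Hence `Ω₃⁰` is isomorphic to the kernel of that matrix, of dimension `|E(H)| - |V(H)| + t`
since the kernel of its transpose consists of the functions constant on the components of `H`.
-/

open scoped BigOperators
open Classical

/-- A digraph: an irreflexive relation on a vertex type. -/
structure Dgraph (V : Type*) where
  Adj : V → V → Prop
  loopless : ∀ v : V, ¬ Adj v v

/-- An elementary `p`-path on the vertex type `V`: a sequence of `p+1` vertices. -/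
abbrev EPath (V : Type*) (p : ℕ) := Fin (p + 1) → V

/-- A path is regular if consecutive vertices are distinct. -/
def IsRegularPath {V : Type*} {p : ℕ} (f : EPath V p) : Prop :=
  ∀ k : Fin p, f k.castSucc ≠ f k.succ

/-- A path is allowed if consecutive vertices are joined by an arrow. -/
def IsAllowedPath {V : Type*} (G : Dgraph V) {p : ℕ} (f : EPath V p) : Prop :=
  ∀ k : Fin p, G.Adj (f k.castSucc) (f k.succ)

/-- The projection of `Λ_p` onto its regular part; this realizes `R_p = Λ_p / I_p`
as the subspace of `Λ_p` spanned by the regular elementary paths. -/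
noncomputable def regProj (K : Type*) [Field K] (V : Type*) (p : ℕ) :
    (EPath V p →₀ K) →ₗ[K] (EPath V p →₀ K) :=
  Finsupp.linearCombination K
    (fun f : EPath V p => if IsRegularPath f then Finsupp.single f (1 : K) else 0)

/-- The (non-reduced) boundary operator on `Λ`. -/
noncomputable def bdryFull (K : Type*) [Field K] (V : Type*) (p : ℕ) :
    (EPath V (p + 1) →₀ K) →ₗ[K] (EPath V p →₀ K) :=
  Finsupp.linearCombination K
    (fun f : EPath V (p + 1) =>
      ∑ q : Fin (p + 2), ((-1 : K) ^ (q : ℕ)) • Finsupp.single (f ∘ q.succAbove) (1 : K))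

/-- The boundary operator `∂` on the regular part (i.e. on `R`). -/
noncomputable def bdry (K : Type*) [Field K] (V : Type*) (p : ℕ) :
    (EPath V (p + 1) →₀ K) →ₗ[K] (EPath V p →₀ K) :=
  (regProj K V p).comp (bdryFull K V p)

/-- The span of the regular elementary paths: the realization of `R_p` inside `Λ_p`. -/
noncomputable def regularMod (K : Type*) [Field K] (V : Type*) (p : ℕ) :
    Submodule K (EPath V p →₀ K) :=
  Submodule.span K {x | ∃ f : EPath V p, IsRegularPath f ∧ x = Finsupp.single f (1 : K)}

/-- `A_p(G)`: the span of the allowed elementary paths. -/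
noncomputable def allowedMod (K : Type*) [Field K] (V : Type*) (G : Dgraph V) (p : ℕ) :
    Submodule K (EPath V p →₀ K) :=
  Submodule.span K {x | ∃ f : EPath V p, IsAllowedPath G f ∧ x = Finsupp.single f (1 : K)}

/-- `Ω_p(G)`: the space of ∂-invariant `p`-paths. -/
noncomputable def Omega (K : Type*) [Field K] (V : Type*) (G : Dgraph V) :
    (p : ℕ) → Submodule K (EPath V p →₀ K)
  | 0 => allowedMod K V G 0
  | (p + 1) => allowedMod K V G (p + 1) ⊓ (allowedMod K V G p).comap (bdry K V p)

/-- An `(a,b)`-cluster: every elementary path occurring with nonzero coefficient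
starts at `a` and ends at `b`. -/
def IsCluster {K : Type*} [Field K] {V : Type*} {p : ℕ} (a b : V) (ω : EPath V p →₀ K) : Prop :=
  ∀ f ∈ ω.support, f 0 = a ∧ f (Fin.last p) = b

/-- A minimal ∂-invariant path: a nonzero element of `Ω_p` such that no nonzero
∂-invariant path is supported on a proper (nonempty) subset of its support. -/
def IsMinimal (K : Type*) [Field K] {V : Type*} (G : Dgraph V) (p : ℕ)
    (ω : EPath V p →₀ K) : Prop :=
  ω ∈ Omega K V G p ∧ ω ≠ 0 ∧
    ∀ ω' : EPath V p →₀ K, ω' ∈ Omega K V G p → ω' ≠ 0 → ¬ (ω'.support ⊂ ω.support)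

/-- A digraph map: every arrow goes to an arrow or collapses to a vertex. -/
structure DgraphMap {V W : Type*} (X : Dgraph V) (Y : Dgraph W) where
  toFun : V → W
  map_adj : ∀ ⦃u v : V⦄, X.Adj u v → Y.Adj (toFun u) (toFun v) ∨ toFun u = toFun v

/-- The induced map `f_* : R_n(X) → R_n(Y)` (in the regular-part realization):
push forward elementary paths and kill the irregular ones. -/
noncomputable def inducedMap (K : Type*) [Field K] {V W : Type*} (φ : V → W) (p : ℕ) :
    (EPath V p →₀ K) →ₗ[K] (EPath W p →₀ K) :=
  (regProj K W p).comp (Finsupp.lmapDomain K K (fun f : EPath V p => φ ∘ f))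

/-- Cyclic successor on `Fin m`. -/
def finRot {m : ℕ} (k : Fin m) : Fin m := ⟨((k : ℕ) + 1) % m, Nat.mod_lt _ k.pos⟩

/-- The vertices of the trapezohedron `T_m`. -/
inductive TVert (m : ℕ) : Type
  | a : TVert m
  | b : TVert m
  | vi : Fin m → TVert m
  | vj : Fin m → TVert m

/-- The adjacency relation of the trapezohedron `T_m`:
`a → i_k`, `i_k → j_k`, `i_{k+1} → j_k`, `j_k → b` (indices mod `m`). -/
def TrapAdj (m : ℕ) : TVert m → TVert m → Prop
  | TVert.a, TVert.vi _ => True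
  | TVert.vi k, TVert.vj l => k = l ∨ k = finRot l
  | TVert.vj _, TVert.b => True
  | _, _ => False

/-- The trapezohedron digraph `T_m`. -/
def Trap (m : ℕ) : Dgraph (TVert m) where
  Adj := TrapAdj m
  loopless := by intro v h; cases v <;> exact h

/-- The trapezohedral path `τ_m`. -/
noncomputable def tau (K : Type*) [Field K] (m : ℕ) : EPath (TVert m) 3 →₀ K :=
  ∑ k : Fin m,
    (Finsupp.single ![TVert.a, TVert.vi k, TVert.vj k, TVert.b] (1 : K)
      - Finsupp.single ![TVert.a, TVert.vi (finRot k), TVert.vj k, TVert.b] (1 : K))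

/-- The submodule of `(a,b)`-clusters. -/
def clusterMod (K : Type*) [Field K] (V : Type*) (p : ℕ) (a b : V) :
    Submodule K (EPath V p →₀ K) where
  carrier := {ω | ∀ f ∈ ω.support, f 0 = a ∧ f (Fin.last p) = b}
  add_mem' := by
    intro x y hx hy f hf
    rcases Finset.mem_union.mp (Finsupp.support_add hf) with h | h
    exacts [hx f h, hy f h]
  zero_mem' := by intro f hf; simp at hf
  smul_mem' := by
    intro c x hx f hf
    exact hx f (Finsupp.support_smul hf)

/-- `Ω₃^{(a,b)}(G)`: the ∂-invariant `(a,b)`-clusters. -/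
noncomputable def OmegaAB (K : Type*) [Field K] (V : Type*) (G : Dgraph V) (a b : V) :
    Submodule K (EPath V 3 →₀ K) :=
  Omega K V G 3 ⊓ clusterMod K V 3 a b

/-- Out-neighbourhood. -/
def Nplus {V : Type*} (G : Dgraph V) (v : V) : Set V := {w | G.Adj v w}

/-- In-neighbourhood. -/
def Nminus {V : Type*} (G : Dgraph V) (v : V) : Set V := {w | G.Adj w v}

/-- `E(X,Y)`: the edges of `G` starting in `X` and ending in `Y`. -/
def Ebetween {V : Type*} (G : Dgraph V) (X Y : Set V) : Set (V × V) :=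
  {p | p.1 ∈ X ∧ p.2 ∈ Y ∧ G.Adj p.1 p.2}

/-- `A = N⁺(a) \ {b}`. -/
def setA {V : Type*} (G : Dgraph V) (a b : V) : Set V := Nplus G a \ {b}

/-- `B = N⁻(b) \ {a}`. -/
def setB {V : Type*} (G : Dgraph V) (a b : V) : Set V := Nminus G b \ {a}

/-- The vertex set of `H = Ind(A \ B, B \ A)`. -/
def Hverts {V : Type*} (G : Dgraph V) (a b : V) : Set V :=
  (setA G a b \ setB G a b) ∪ (setB G a b \ setA G a b)

/-- `H = Ind(A \ B, B \ A)` regarded as an undirected (simple) graph on its vertex set. -/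
def Hgraph {V : Type*} (G : Dgraph V) (a b : V) : SimpleGraph (Hverts G a b) where
  Adj u v :=
    ((u : V) ∈ setA G a b \ setB G a b ∧ (v : V) ∈ setB G a b \ setA G a b ∧ G.Adj u v)
      ∨ ((v : V) ∈ setA G a b \ setB G a b ∧ (u : V) ∈ setB G a b \ setA G a b ∧ G.Adj v u)
  symm := ⟨by intro u v h; exact h.symm⟩
  loopless := ⟨by
    intro u h
    rcases h with ⟨_, _, h3⟩ | ⟨_, _, h3⟩ <;> exact G.loopless _ h3⟩

/-- The set of vertices of `G` belonging to the connected component `c` of `H`. -/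
def compVerts {V : Type*} (G : Dgraph V) (a b : V)
    (c : (Hgraph G a b).ConnectedComponent) : Set V :=
  {v | ∃ h : v ∈ Hverts G a b, (Hgraph G a b).connectedComponentMk ⟨v, h⟩ = c}

/-- The set `S_k` associated to a connected component of `H`. -/
def Sset {V : Type*} (G : Dgraph V) (a b : V)
    (c : (Hgraph G a b).ConnectedComponent) : Set (V × V) :=
  Ebetween G (compVerts G a b c ∩ (setA G a b \ setB G a b))
      ((Nplus G a ∪ {a}) ∩ Nminus G b)
    ∪ Ebetween G (Nplus G a ∩ (Nminus G b ∪ {b}))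
      (compVerts G a b c ∩ (setB G a b \ setA G a b))

section SignedIncidence

open Matrix

variable (K : Type*) [Field K] {W E : Type*} (src tgt : E → W)

noncomputable def signedIncMatrix : Matrix W E K :=
  fun w e => (if src e = w then 1 else 0) - (if tgt e = w then 1 else 0)

def SimpleGraph.ofEdges : SimpleGraph W :=
  SimpleGraph.fromRel fun u v => ∃ e, src e = u ∧ tgt e = v

variable [Fintype W]

lemma signedIncMatrix_transpose_mulVec (h : W → K) (e : E) :
    ((signedIncMatrix K src tgt)ᵀ *ᵥ h) e = h (src e) - h (tgt e) := by
  simp [Matrix.mulVec, dotProduct, signedIncMatrix, sub_mul, Finset.sum_sub_distrib]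

lemma mem_ker_signedIncMatrix_transpose_iff {h : W → K} :
    h ∈ LinearMap.ker (signedIncMatrix K src tgt)ᵀ.mulVecLin ↔ ∀ e, h (src e) = h (tgt e) := by
  simp only [LinearMap.mem_ker, Matrix.mulVecLin_apply, funext_iff, Pi.zero_apply,
    signedIncMatrix_transpose_mulVec, sub_eq_zero]

lemma range_funLeft_connectedComponentMk :
    LinearMap.range (LinearMap.funLeft K K (SimpleGraph.ofEdges src tgt).connectedComponentMk)
      = LinearMap.ker (signedIncMatrix K src tgt)ᵀ.mulVecLin := by
  ext h
  rw [mem_ker_signedIncMatrix_transpose_iff]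
  constructor
  · rintro ⟨φ, rfl⟩ e
    by_cases hst : src e = tgt e
    · simp [LinearMap.funLeft, hst]
    · exact congrArg φ (SimpleGraph.ConnectedComponent.connectedComponentMk_eq_of_adj
        ⟨hst, Or.inl ⟨e, rfl, rfl⟩⟩)
  · intro hh
    have hwalk : ∀ {u v} (_ : (SimpleGraph.ofEdges src tgt).Walk u v), h u = h v := by
      intro u v p
      induction p with
      | nil => rfl
      | cons hadj _ ih =>
        obtain ⟨-, ⟨e, rfl, rfl⟩ | ⟨e, rfl, rfl⟩⟩ := hadj
        exacts [(hh e).trans ih, (hh e).symm.trans ih]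
    refine ⟨fun c => h c.out, funext fun v => ?_⟩
    obtain ⟨p⟩ := SimpleGraph.ConnectedComponent.exact
      (Quot.out_eq ((SimpleGraph.ofEdges src tgt).connectedComponentMk v))
    exact hwalk p

lemma finrank_ker_signedIncMatrix_transpose :
    Module.finrank K (LinearMap.ker (signedIncMatrix K src tgt)ᵀ.mulVecLin)
      = Nat.card (SimpleGraph.ofEdges src tgt).ConnectedComponent := by
  have : Fintype (SimpleGraph.ofEdges src tgt).ConnectedComponent := Fintype.ofFinite _
  rw [← range_funLeft_connectedComponentMk, LinearMap.finrank_range_of_inj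
    (LinearMap.funLeft_injective_of_surjective K K _ (fun c => c.ind fun v => ⟨v, rfl⟩)),
    Module.finrank_fintype_fun_eq_card, Nat.card_eq_fintype_card]

variable [Fintype E]

lemma sum_signedIncMatrix_mulVec_smul {M : Type*} [AddCommGroup M] [Module K M]
    (x : W → M) (g : E → K) :
    ∑ w, (signedIncMatrix K src tgt *ᵥ g) w • x w = ∑ e, g e • (x (src e) - x (tgt e)) := by
  simp only [Matrix.mulVec, dotProduct, Finset.sum_smul]
  rw [Finset.sum_comm]
  refine Finset.sum_congr rfl fun e _ => ?_
  simp [signedIncMatrix, sub_smul, Finset.sum_sub_distrib, ite_smul, mul_comm, smul_sub, mul_smul]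

theorem finrank_ker_signedIncMatrix :
    (Module.finrank K (LinearMap.ker (signedIncMatrix K src tgt).mulVecLin) : ℤ)
      = Nat.card E - Nat.card W + Nat.card (SimpleGraph.ofEdges src tgt).ConnectedComponent := by
  have hE := (signedIncMatrix K src tgt).mulVecLin.finrank_range_add_finrank_ker
  have hW := (signedIncMatrix K src tgt)ᵀ.mulVecLin.finrank_range_add_finrank_ker
  have hrank := Matrix.rank_transpose (signedIncMatrix K src tgt)
  rw [Matrix.rank, Matrix.rank] at hrank
  rw [Module.finrank_fintype_fun_eq_card, ← Nat.card_eq_fintype_card] at hE hW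
  rw [finrank_ker_signedIncMatrix_transpose, hrank] at hW
  omega

end SignedIncidence

section PathComplex

variable {K : Type*} [Field K] {V : Type*} (G : Dgraph V)

lemma allowedMod_eq_supported (p : ℕ) :
    allowedMod K V G p = Finsupp.supported K K {f | IsAllowedPath G f} := by
  rw [Finsupp.supported_eq_span_single, allowedMod, Set.image]
  simp only [eq_comm]
  rfl

lemma mem_allowedMod_iff {p : ℕ} {ω : EPath V p →₀ K} :
    ω ∈ allowedMod K V G p ↔ ∀ f, ¬ IsAllowedPath G f → ω f = 0 := by
  rw [allowedMod_eq_supported, Finsupp.mem_supported']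
  rfl

lemma single_mem_allowedMod {p : ℕ} {f : EPath V p} (hf : IsAllowedPath G f) (c : K) :
    Finsupp.single f c ∈ allowedMod K V G p := by
  rw [allowedMod_eq_supported]
  exact Finsupp.single_mem_supported K c hf

lemma sum_smul_single_mem_allowedMod_iff {W : Type*} [Fintype W] {p : ℕ} {q : W → EPath V p}
    (hq : Function.Injective q) (hna : ∀ w, ¬ IsAllowedPath G (q w)) (x : W → K) :
    ∑ w, x w • Finsupp.single (q w) (1 : K) ∈ allowedMod K V G p ↔ x = 0 := by
  refine ⟨fun h => funext fun w => ?_, by rintro rfl; simp⟩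
  have hw := (mem_allowedMod_iff G).1 h (q w) (hna w)
  simpa [Finsupp.finsetSum_apply, Finsupp.single_apply, hq.eq_iff] using hw

lemma isRegularPath_vec3 {x y z : V} (hxy : x ≠ y) (hyz : y ≠ z) : IsRegularPath ![x, y, z] := by
  intro k
  fin_cases k
  exacts [hxy, hyz]

lemma bdry_single_vec4 {x₀ x₁ x₂ x₃ : V} (h01 : x₀ ≠ x₁) (h12 : x₁ ≠ x₂) (h23 : x₂ ≠ x₃)
    (h02 : x₀ ≠ x₂) (h13 : x₁ ≠ x₃) :
    bdry K V 2 (Finsupp.single ![x₀, x₁, x₂, x₃] 1)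
      = Finsupp.single ![x₁, x₂, x₃] 1 - Finsupp.single ![x₀, x₂, x₃] 1
        + Finsupp.single ![x₀, x₁, x₃] 1 - Finsupp.single ![x₀, x₁, x₂] 1 := by
  have face₀ : ![x₀, x₁, x₂, x₃] ∘ Fin.succAbove 0 = ![x₁, x₂, x₃] := by
    funext k; fin_cases k <;> rfl
  have face₁ : ![x₀, x₁, x₂, x₃] ∘ Fin.succAbove 1 = ![x₀, x₂, x₃] := by
    funext k; fin_cases k <;> rfl
  have face₂ : ![x₀, x₁, x₂, x₃] ∘ Fin.succAbove 2 = ![x₀, x₁, x₃] := by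
    funext k; fin_cases k <;> rfl
  have face₃ : ![x₀, x₁, x₂, x₃] ∘ Fin.succAbove 3 = ![x₀, x₁, x₂] := by
    funext k; fin_cases k <;> rfl
  rw [bdry, LinearMap.comp_apply, bdryFull, Finsupp.linearCombination_single, one_smul, map_sum,
    Fin.sum_univ_four, face₀, face₁, face₂, face₃]
  simp only [map_smul, regProj, Finsupp.linearCombination_single, one_smul,
    if_pos (isRegularPath_vec3 h12 h23), if_pos (isRegularPath_vec3 h02 h23),
    if_pos (isRegularPath_vec3 h01 h13), if_pos (isRegularPath_vec3 h01 h12)]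
  norm_num
  module

end PathComplex

section TerminalFree

variable {V : Type*} (G : Dgraph V) (a b : V)

lemma Dgraph.ne_of_adj {u v : V} (h : G.Adj u v) : u ≠ v := fun huv => G.loopless u (huv ▸ h)

lemma mem_setA_diff_setB {i : V} :
    i ∈ setA G a b \ setB G a b ↔ G.Adj a i ∧ i ≠ b ∧ ¬ G.Adj i b := by
  have hia : G.Adj a i → i ≠ a := fun h => (G.ne_of_adj h).symm
  simp only [setA, setB, Nplus, Nminus, Set.mem_sdiff, Set.mem_ofPred_eq, Set.mem_singleton_iff]
  grind

lemma mem_setB_diff_setA {j : V} :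
    j ∈ setB G a b \ setA G a b ↔ G.Adj j b ∧ j ≠ a ∧ ¬ G.Adj a j := by
  have hjb : G.Adj j b → j ≠ b := G.ne_of_adj
  simp only [setA, setB, Nplus, Nminus, Set.mem_sdiff, Set.mem_ofPred_eq, Set.mem_singleton_iff]
  grind

def Hedges : Set (V × V) := Ebetween G (setA G a b \ setB G a b) (setB G a b \ setA G a b)

def Hedges.src (e : Hedges G a b) : Hverts G a b := ⟨e.1.1, Or.inl e.2.1⟩

def Hedges.tgt (e : Hedges G a b) : Hverts G a b := ⟨e.1.2, Or.inr e.2.2.1⟩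

lemma Hgraph_eq_ofEdges :
    Hgraph G a b = SimpleGraph.ofEdges (Hedges.src G a b) (Hedges.tgt G a b) := by
  ext u v
  simp only [Hgraph, SimpleGraph.ofEdges, SimpleGraph.fromRel_adj]
  constructor
  · rintro (⟨hu, hv, huv⟩ | ⟨hv, hu, hvu⟩)
    · exact ⟨fun h => G.ne_of_adj huv (congrArg Subtype.val h),
        Or.inl ⟨⟨(u, v), hu, hv, huv⟩, rfl, rfl⟩⟩
    · exact ⟨fun h => G.ne_of_adj hvu (congrArg Subtype.val h).symm,
        Or.inr ⟨⟨(v, u), hv, hu, hvu⟩, rfl, rfl⟩⟩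
  · rintro ⟨-, ⟨e, rfl, rfl⟩ | ⟨e, rfl, rfl⟩⟩
    exacts [Or.inl e.2, Or.inr e.2]

def edgePath (e : Hedges G a b) : EPath V 3 := ![a, e.1.1, e.1.2, b]

lemma edgePath_injective : Function.Injective (edgePath G a b) := fun _ _ h =>
  Subtype.ext (Prod.ext (congrFun h 1) (congrFun h 2))

lemma isAllowedPath_edgePath (e : Hedges G a b) : IsAllowedPath G (edgePath G a b e) := by
  obtain ⟨hi, hj, hij⟩ := e.2
  intro k
  fin_cases k
  exacts [((mem_setA_diff_setB G a b).1 hi).1, hij, ((mem_setB_diff_setA G a b).1 hj).1]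

def IsTerminal (f : EPath V 3) : Prop :=
  (G.Adj a (f 2) ∨ a = f 2) ∨ (G.Adj (f 1) b ∨ f 1 = b)

lemma not_isTerminal_edgePath (e : Hedges G a b) : ¬ IsTerminal G a b (edgePath G a b e) := by
  obtain ⟨-, hib, hnib⟩ := (mem_setA_diff_setB G a b).1 e.2.1
  obtain ⟨-, hja, hnaj⟩ := (mem_setB_diff_setA G a b).1 e.2.2.1
  rintro ((h | h) | (h | h))
  exacts [hnaj h, hja h.symm, hnib h, hib h]

lemma exists_edgePath_eq {f : EPath V 3} (hf : IsAllowedPath G f) (h0 : f 0 = a) (h3 : f 3 = b)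
    (hnt : ¬ IsTerminal G a b f) : ∃ e, edgePath G a b e = f := by
  simp only [IsTerminal, not_or] at hnt
  obtain ⟨⟨hnaj, hja⟩, hnib, hib⟩ := hnt
  have hi : f 1 ∈ setA G a b \ setB G a b :=
    (mem_setA_diff_setB G a b).2 ⟨h0 ▸ hf 0, hib, hnib⟩
  have hj : f 2 ∈ setB G a b \ setA G a b :=
    (mem_setB_diff_setA G a b).2 ⟨h3 ▸ hf 2, Ne.symm hja, hnaj⟩
  refine ⟨⟨(f 1, f 2), hi, hj, hf 1⟩, funext fun k => ?_⟩
  fin_cases k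
  exacts [h0.symm, rfl, rfl, h3.symm]

end TerminalFree

section Weights

open Matrix

variable (K : Type*) [Field K] {V : Type*} (G : Dgraph V) (a b : V)

noncomputable def terminalFreeOmega : Submodule K (EPath V 3 →₀ K) :=
  OmegaAB K V G a b ⊓ Finsupp.supported K K {f | ¬ IsTerminal G a b f}

lemma exists_edgePath_eq_of_mem_terminalFreeOmega {ω : EPath V 3 →₀ K}
    (hω : ω ∈ terminalFreeOmega K G a b) {f : EPath V 3} (hf : ω f ≠ 0) :
    ∃ e, edgePath G a b e = f := by
  obtain ⟨⟨⟨hallowed, -⟩, hcluster⟩, hnonterminal⟩ := hω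
  have hsupp : f ∈ ω.support := Finsupp.mem_support_iff.2 hf
  exact exists_edgePath_eq G a b
    (by_contra fun hna => hf ((mem_allowedMod_iff G).1 hallowed f hna))
    (hcluster f hsupp).1 (hcluster f hsupp).2 (hnonterminal hsupp)

variable [Fintype V]

noncomputable def clusterOfWeights : (Hedges G a b → K) →ₗ[K] (EPath V 3 →₀ K) :=
  Fintype.linearCombination K fun e => Finsupp.single (edgePath G a b e) 1

lemma clusterOfWeights_apply (g : Hedges G a b → K) (f : EPath V 3) :
    clusterOfWeights K G a b g f = ∑ e, if edgePath G a b e = f then g e else 0 := by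
  simp [clusterOfWeights, Fintype.linearCombination_apply, Finsupp.finsetSum_apply,
    Finsupp.single_apply]

lemma clusterOfWeights_apply_edgePath (g : Hedges G a b → K) (e : Hedges G a b) :
    clusterOfWeights K G a b g (edgePath G a b e) = g e := by
  simp [clusterOfWeights_apply, (edgePath_injective G a b).eq_iff]

lemma clusterOfWeights_injective : Function.Injective (clusterOfWeights K G a b) :=
  fun g g' h => funext fun e => by
    rw [← clusterOfWeights_apply_edgePath K G a b g, h, clusterOfWeights_apply_edgePath]

lemma exists_edgePath_eq_of_clusterOfWeights_ne_zero {g : Hedges G a b → K} {f : EPath V 3}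
    (hf : clusterOfWeights K G a b g f ≠ 0) : ∃ e, edgePath G a b e = f := by
  rw [clusterOfWeights_apply] at hf
  obtain ⟨e, -, he⟩ := Finset.exists_ne_zero_of_sum_ne_zero hf
  exact ⟨e, by_contra fun h => he (if_neg h)⟩

lemma clusterOfWeights_eq_of_mem {ω : EPath V 3 →₀ K} (hω : ω ∈ terminalFreeOmega K G a b) :
    clusterOfWeights K G a b (fun e => ω (edgePath G a b e)) = ω := by
  ext f
  by_cases hf : ∃ e, edgePath G a b e = f
  · obtain ⟨e, rfl⟩ := hf
    exact clusterOfWeights_apply_edgePath K G a b _ e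
  · rw [not_imp_comm.1 (exists_edgePath_eq_of_mem_terminalFreeOmega K G a b hω) hf]
    exact not_imp_comm.1 (exists_edgePath_eq_of_clusterOfWeights_ne_zero K G a b) hf

lemma bdry_clusterOfWeights (g : Hedges G a b → K) :
    bdry K V 2 (clusterOfWeights K G a b g)
      = ∑ e, g e • (Finsupp.single ![e.1.1, e.1.2, b] 1 - Finsupp.single ![a, e.1.1, e.1.2] 1)
        + ∑ w, (signedIncMatrix K (Hedges.src G a b) (Hedges.tgt G a b) *ᵥ g) w •
            Finsupp.single ![a, (w : V), b] 1 := by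
  rw [sum_signedIncMatrix_mulVec_smul, ← Finset.sum_add_distrib, clusterOfWeights,
    Fintype.linearCombination_apply, map_sum]
  refine Finset.sum_congr rfl fun e _ => ?_
  obtain ⟨hai, hib, -⟩ := (mem_setA_diff_setB G a b).1 e.2.1
  obtain ⟨hjb, hja, -⟩ := (mem_setB_diff_setA G a b).1 e.2.2.1
  rw [map_smul, edgePath, bdry_single_vec4 (G.ne_of_adj hai) (G.ne_of_adj e.2.2.2)
    (G.ne_of_adj hjb) (Ne.symm hja) hib, Hedges.src, Hedges.tgt]
  module

lemma clusterOfWeights_mem_terminalFreeOmega_iff (g : Hedges G a b → K) :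
    clusterOfWeights K G a b g ∈ terminalFreeOmega K G a b
      ↔ bdry K V 2 (clusterOfWeights K G a b g) ∈ allowedMod K V G 2 := by
  have hsupp : ∀ f ∈ (clusterOfWeights K G a b g).support, ∃ e, edgePath G a b e = f :=
    fun f hf => exists_edgePath_eq_of_clusterOfWeights_ne_zero K G a b
      (Finsupp.mem_support_iff.1 hf)
  have hallowed : clusterOfWeights K G a b g ∈ allowedMod K V G 3 :=
    (mem_allowedMod_iff G).2 fun f hf => by_contra fun h => by
      obtain ⟨e, rfl⟩ := exists_edgePath_eq_of_clusterOfWeights_ne_zero K G a b h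
      exact hf (isAllowedPath_edgePath G a b e)
  have hcluster : clusterOfWeights K G a b g ∈ clusterMod K V 3 a b := fun f hf => by
    obtain ⟨e, rfl⟩ := hsupp f hf
    exact ⟨rfl, rfl⟩
  have hnonterminal :
      clusterOfWeights K G a b g ∈ Finsupp.supported K K {f | ¬ IsTerminal G a b f} :=
    fun f hf => by
      obtain ⟨e, rfl⟩ := hsupp f hf
      exact not_isTerminal_edgePath G a b e
  exact ⟨fun h => h.1.1.2, fun h => ⟨⟨⟨hallowed, h⟩, hcluster⟩, hnonterminal⟩⟩

lemma bdry_clusterOfWeights_mem_allowedMod_iff (g : Hedges G a b → K) :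
    bdry K V 2 (clusterOfWeights K G a b g) ∈ allowedMod K V G 2
      ↔ signedIncMatrix K (Hedges.src G a b) (Hedges.tgt G a b) *ᵥ g = 0 := by
  have hface : ∀ w : Hverts G a b, ¬ IsAllowedPath G ![a, (w : V), b] := by
    rintro ⟨w, hw | hw⟩ hall
    · exact ((mem_setA_diff_setB G a b).1 hw).2.2 (hall 1)
    · exact ((mem_setB_diff_setA G a b).1 hw).2.2 (hall 0)
  have hinj : Function.Injective fun w : Hverts G a b => ![a, (w : V), b] :=
    fun _ _ h => Subtype.ext (congrFun h 1)
  have hallowed : ∑ e, g e • (Finsupp.single ![e.1.1, e.1.2, b] (1 : K)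
      - Finsupp.single ![a, e.1.1, e.1.2] 1) ∈ allowedMod K V G 2 := by
    refine Submodule.sum_mem _ fun e _ => Submodule.smul_mem _ _ (Submodule.sub_mem _ ?_ ?_)
    all_goals refine single_mem_allowedMod G (fun k => ?_) _
    all_goals fin_cases k
    exacts [e.2.2.2, ((mem_setB_diff_setA G a b).1 e.2.2.1).1,
      ((mem_setA_diff_setB G a b).1 e.2.1).1, e.2.2.2]
  rw [bdry_clusterOfWeights, Submodule.add_mem_iff_right _ hallowed,
    sum_smul_single_mem_allowedMod_iff G hinj hface]

lemma terminalFreeOmega_eq_map_ker :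
    terminalFreeOmega K G a b = (LinearMap.ker
      (signedIncMatrix K (Hedges.src G a b) (Hedges.tgt G a b)).mulVecLin).map
        (clusterOfWeights K G a b) := by
  ext ω
  simp only [Submodule.mem_map, LinearMap.mem_ker, Matrix.mulVecLin_apply,
    ← bdry_clusterOfWeights_mem_allowedMod_iff, ← clusterOfWeights_mem_terminalFreeOmega_iff]
  exact ⟨fun hω => ⟨_, (clusterOfWeights_eq_of_mem K G a b hω).symm ▸ hω,
    clusterOfWeights_eq_of_mem K G a b hω⟩, by rintro ⟨g, hg, rfl⟩; exact hg⟩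

lemma finrank_terminalFreeOmega :
    (Module.finrank K (terminalFreeOmega K G a b) : ℤ)
      = (Hedges G a b).ncard - (Hverts G a b).ncard
        + Nat.card (Hgraph G a b).ConnectedComponent := by
  rw [terminalFreeOmega_eq_map_ker, ← LinearEquiv.finrank_eq (Submodule.equivMapOfInjective _
    (clusterOfWeights_injective K G a b) _), finrank_ker_signedIncMatrix, Hgraph_eq_ofEdges]
  rfl

end Weights

theorem statement15 (K : Type*) [Field K] {V : Type*} [Fintype V] (G : Dgraph V) (a b : V) :
    ∃ S : Submodule K (EPath V 3 →₀ K),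
      (S : Set (EPath V 3 →₀ K)) =
        {ω | ω ∈ OmegaAB K V G a b ∧ ∀ f ∈ ω.support,
            ¬ ((G.Adj a (f 2) ∨ a = f 2) ∨ (G.Adj (f 1) b ∨ f 1 = b))} ∧
      S ≤ OmegaAB K V G a b ∧
      (Module.finrank K ↥S : ℤ)
        = ((Ebetween G (setA G a b \ setB G a b) (setB G a b \ setA G a b)).ncard : ℤ)
          - ((Hverts G a b).ncard : ℤ)
          + (Nat.card ((Hgraph G a b).ConnectedComponent) : ℤ) :=
  ⟨terminalFreeOmega K G a b, rfl, inf_le_left, finrank_terminalFreeOmega K G a b⟩
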